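/- Let A be a unital algebra over ℂ that is generated as an algebra by its idempotents, M a unital A-bimodule, and m, n positive integers with m ≠ n. If δ : A → M is an (m,n)-Jordan derivable mapping at zero with δ(1) = 0, then δ = 0. -/

import Mathlib

/-!
Applied to the orthogonal pair `P, 1 - P` for an idempotent `P`, the identity says
`m • (δ P)·u + n • u·(δ P) = 0` for the involution `u = 1 - 2P`; multiplying by `u` on either
side gives `(n² - m²) • δ P = 0`, so `δ` kills idempotents. Since `P + P a (1 - P)` is again
idempotent, `δ` kills the off-diagonal Peirce corners, and the pairs `(1 - P, P a P)`,
`(P, (1 - P) a (1 - P))` show that `P` acts on `δ` of the diagonal corners as `1` and `0`.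
Hence `δ (P a) = P • δ a`; the elements `x` with `δ (x b) = x • δ b` for all `b` form a subring,
which contains the idempotents and so is all of `A`, and then `δ a = a • δ 1 = 0`.
-/

open MulOpposite

section

variable {A M : Type*} [Ring A] [AddCommGroup M] [Module A M]

theorem AddMonoidHom.map_mul_eq_smul_of_mem_closure (δ : A →+ M) {S : Set A}
    (hS : ∀ s ∈ S, ∀ b, δ (s * b) = s • δ b) {x : A} (hx : x ∈ Subring.closure S) (b : A) :
    δ (x * b) = x • δ b := by
  induction hx using Subring.closure_induction generalizing b with
  | mem s hs => exact hS s hs b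
  | zero => rw [zero_mul, map_zero, zero_smul]
  | one => rw [one_mul, one_smul]
  | add x y _ _ hx hy => rw [add_mul, map_add, hx, hy, add_smul]
  | neg x _ hx => rw [neg_mul, map_neg, hx, neg_smul]
  | mul x y _ _ hx hy => rw [mul_assoc, hx, hy, mul_smul]

theorem IsIdempotentElem.add_mul_mul_one_sub {P : A} (hP : IsIdempotentElem P) (a : A) :
    IsIdempotentElem (P + P * a * (1 - P)) := by
  have hleft : P * (P * a * (1 - P)) = P * a * (1 - P) := by
    rw [← mul_assoc, ← mul_assoc, hP.eq]
  have hright : P * a * (1 - P) * P = 0 := by rw [mul_assoc, hP.one_sub_mul_self, mul_zero]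
  have hsq : P * a * (1 - P) * (P * a * (1 - P)) = 0 := by
    rw [← mul_assoc, ← mul_assoc, hright, zero_mul, zero_mul]
  rw [IsIdempotentElem, mul_add, add_mul, add_mul, hP.eq, hleft, hright, hsq, add_zero, add_zero]

theorem IsIdempotentElem.one_sub_sub_self_mul_self {P : A} (hP : IsIdempotentElem P) :
    (1 - P - P) * (1 - P - P) = 1 := by
  simp only [sub_mul, mul_sub, one_mul, mul_one, hP.eq]
  abel

variable [Module Aᵐᵒᵖ M]

section TorsionFree

variable [SMulCommClass A Aᵐᵒᵖ M] [IsAddTorsionFree M] {m n : ℕ}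

theorem eq_zero_of_nsmul_op_smul_add_nsmul_smul_eq_zero {u : A} (hu : u * u = 1) (hmn : m ≠ n)
    {r : M} (h : m • (op u • r) + n • (u • r) = 0) : r = 0 := by
  have hl : m • (u • op u • r) + n • r = 0 := by
    simpa only [smul_add, smul_comm u (_ : ℕ), smul_smul u, hu, one_smul, smul_zero]
      using congrArg (u • ·) h
  have hr : m • r + n • (u • op u • r) = 0 := by
    simpa only [smul_add, smul_comm (op u) (_ : ℕ), smul_smul (op u), ← op_mul, hu, op_one,
      one_smul, ← smul_comm u (op u) r, smul_zero] using congrArg (op u • ·) h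
  generalize u • op u • r = c at hl hr
  have : ((n : ℤ) ^ 2 - (m : ℤ) ^ 2) • r = 0 := by
    linear_combination (norm := module) (n : ℤ) • hl - (m : ℤ) • hr
  refine (smul_eq_zero.mp this).resolve_left (sub_ne_zero.mpr ?_)
  exact_mod_cast (Nat.pow_left_injective two_ne_zero).ne hmn.symm

theorem IsIdempotentElem.smul_eq_zero_of_nsmul_op_smul_add_nsmul_smul_eq_zero {E : A}
    (hE : IsIdempotentElem E) (hm : m ≠ 0) (hn : n ≠ 0) {v : M}
    (h : m • (op E • v) + n • (E • v) = 0) : E • v = 0 := by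
  have hl : m • (E • op E • v) + n • (E • v) = 0 := by
    simpa only [smul_add, smul_comm E (_ : ℕ), smul_smul E, hE.eq, smul_zero]
      using congrArg (E • ·) h
  have hr : m • (op E • v) + n • (E • op E • v) = 0 := by
    simpa only [smul_add, smul_comm (op E) (_ : ℕ), smul_smul (op E), ← op_mul, hE.eq,
      ← smul_comm E (op E) v, smul_zero] using congrArg (op E • ·) h
  generalize E • op E • v = c at hl hr
  generalize E • v = a at *
  generalize op E • v = b at *
  have : (n * (m + n)) • a = 0 := by
    linear_combination (norm := module) m • h + n • hl - m • hr
  simpa [hm, hn] using this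

end TorsionFree

def IsJordanDerivableAtZero (m n : ℕ) (δ : A → M) : Prop :=
  ∀ X Y : A, X * Y = 0 → Y * X = 0 →
    (m + n) • δ (X * Y + Y * X) =
      (2 * m) • (op Y • δ X) + (2 * m) • (op X • δ Y) + (2 * n) • (X • δ Y) + (2 * n) • (Y • δ X)

namespace IsJordanDerivableAtZero

variable [IsAddTorsionFree M] {m n : ℕ} {δ : A →+ M}

theorem nsmul_add_nsmul_eq_zero (hδ : IsJordanDerivableAtZero m n δ) {X Y : A}
    (hXY : X * Y = 0) (hYX : Y * X = 0) :
    m • (op Y • δ X + op X • δ Y) + n • (X • δ Y + Y • δ X) = 0 := by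
  have h := hδ X Y hXY hYX
  rw [hXY, hYX, add_zero, map_zero, smul_zero] at h
  have : 2 • (m • (op Y • δ X + op X • δ Y) + n • (X • δ Y + Y • δ X)) = 0 := by
    simpa only [smul_add, mul_smul, add_assoc] using h.symm
  exact (smul_eq_zero.mp this).resolve_left two_ne_zero

variable [SMulCommClass A Aᵐᵒᵖ M]

theorem map_eq_zero_of_isIdempotentElem (hδ : IsJordanDerivableAtZero m n δ) (hδ1 : δ 1 = 0)
    (hmn : m ≠ n) {P : A} (hP : IsIdempotentElem P) : δ P = 0 := by
  have h := hδ.nsmul_add_nsmul_eq_zero hP.mul_one_sub_self hP.one_sub_mul_self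
  rw [map_sub, hδ1, zero_sub, smul_neg, smul_neg, ← sub_eq_add_neg, neg_add_eq_sub,
    ← sub_smul, ← sub_smul, ← op_sub] at h
  exact eq_zero_of_nsmul_op_smul_add_nsmul_smul_eq_zero hP.one_sub_sub_self_mul_self hmn h

theorem smul_map_eq_zero_of_mul_eq_zero (hδ : IsJordanDerivableAtZero m n δ)
    (hm : m ≠ 0) (hn : n ≠ 0) {E Y : A} (hE : IsIdempotentElem E) (hδE : δ E = 0)
    (hEY : E * Y = 0) (hYE : Y * E = 0) : E • δ Y = 0 := by
  have h := hδ.nsmul_add_nsmul_eq_zero hEY hYE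
  rw [hδE, smul_zero, smul_zero, zero_add, add_zero] at h
  exact hE.smul_eq_zero_of_nsmul_op_smul_add_nsmul_smul_eq_zero hm hn h

theorem map_mul_mul_one_sub (hδ : IsJordanDerivableAtZero m n δ) (hδ1 : δ 1 = 0)
    (hmn : m ≠ n) {P : A} (hP : IsIdempotentElem P) (a : A) : δ (P * a * (1 - P)) = 0 := by
  have h := hδ.map_eq_zero_of_isIdempotentElem hδ1 hmn (hP.add_mul_mul_one_sub a)
  rwa [map_add, hδ.map_eq_zero_of_isIdempotentElem hδ1 hmn hP, zero_add] at h

theorem map_mul_eq_smul_of_isIdempotentElem (hδ : IsJordanDerivableAtZero m n δ)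
    (hδ1 : δ 1 = 0) (hm : m ≠ 0) (hn : n ≠ 0) (hmn : m ≠ n) {P : A}
    (hP : IsIdempotentElem P) (a : A) : δ (P * a) = P • δ a := by
  have hPaQ : δ (P * a * (1 - P)) = 0 := hδ.map_mul_mul_one_sub hδ1 hmn hP a
  have hQaP : δ ((1 - P) * a * P) = 0 := by
    simpa only [sub_sub_cancel] using hδ.map_mul_mul_one_sub hδ1 hmn hP.one_sub a
  have hPaP : (1 - P) • δ (P * a * P) = 0 :=
    hδ.smul_map_eq_zero_of_mul_eq_zero hm hn hP.one_sub
      (hδ.map_eq_zero_of_isIdempotentElem hδ1 hmn hP.one_sub)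
      (by rw [← mul_assoc, ← mul_assoc, hP.one_sub_mul_self, zero_mul, zero_mul])
      (by rw [mul_assoc, hP.mul_one_sub_self, mul_zero])
  have hQaQ : P • δ ((1 - P) * a * (1 - P)) = 0 :=
    hδ.smul_map_eq_zero_of_mul_eq_zero hm hn hP (hδ.map_eq_zero_of_isIdempotentElem hδ1 hmn hP)
      (by rw [← mul_assoc, ← mul_assoc, hP.mul_one_sub_self, zero_mul, zero_mul])
      (by rw [mul_assoc, hP.one_sub_mul_self, mul_zero])
  have hδPa : δ (P * a) = δ (P * a * P) := by
    rw [← add_zero (δ (P * a * P)), ← hPaQ, ← map_add, ← mul_add, add_sub_cancel, mul_one]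
  have hδa : δ a = δ (P * a * P) + δ ((1 - P) * a * (1 - P)) := by
    conv_lhs => rw [show a = P * a * P + P * a * (1 - P) + ((1 - P) * a * P
      + (1 - P) * a * (1 - P)) by noncomm_ring]
    rw [map_add, map_add, map_add, hPaQ, hQaP, add_zero, zero_add]
  rw [sub_smul, one_smul, sub_eq_zero] at hPaP
  rw [hδPa, hδa, smul_add, hQaQ, add_zero]
  exact hPaP

end IsJordanDerivableAtZero

end

theorem mn_jordan_derivable_at_zero_eq_zero_of_generated_by_idempotents_general
    {A M : Type*} [Ring A]
    [AddCommGroup M] [Module ℂ M] [Module A M] [Module Aᵐᵒᵖ M]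
    [SMulCommClass A Aᵐᵒᵖ M]
    (m n : ℕ) (hm : 0 < m) (hn : 0 < n) (hmn : m ≠ n)
    (δ : A → M) (hadd : ∀ a b : A, δ (a + b) = δ a + δ b)
    (hδ1 : δ 1 = 0)
    (hzero : ∀ X Y : A, X * Y = 0 → Y * X = 0 →
      (m + n) • δ (X * Y + Y * X) =
        (2 * m) • (op Y • δ X) + (2 * m) • (op X • δ Y)
          + (2 * n) • (X • δ Y) + (2 * n) • (Y • δ X))
    (hgen : Subring.closure {P : A | P * P = P} = ⊤) :
    ∀ a : A, δ a = 0 := by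
  have : IsAddTorsionFree M := .of_isTorsionFree ℂ M
  let D : A →+ M := .mk' δ hadd
  have hD : IsJordanDerivableAtZero m n D := hzero
  have hmul (x b : A) : D (x * b) = x • D b :=
    D.map_mul_eq_smul_of_mem_closure
      (fun P hP ↦ hD.map_mul_eq_smul_of_isIdempotentElem hδ1 hm.ne' hn.ne' hmn hP)
      (hgen ▸ Subring.mem_top x) b
  intro a
  simpa [D, hδ1] using hmul a 1

/-- If `A` is generated by its idempotents, then every
`(m,n)`-Jordan derivable mapping at zero with `δ 1 = 0` vanishes. -/
theorem mn_jordan_derivable_at_zero_eq_zero_of_generated_by_idempotents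
    {A M : Type*} [Ring A] [Algebra ℂ A]
    [AddCommGroup M] [Module ℂ M] [Module A M] [Module Aᵐᵒᵖ M]
    [SMulCommClass A Aᵐᵒᵖ M]
    (m n : ℕ) (hm : 0 < m) (hn : 0 < n) (hmn : m ≠ n)
    (δ : A → M) (hadd : ∀ a b : A, δ (a + b) = δ a + δ b)
    (hδ1 : δ 1 = 0)
    (hzero : ∀ X Y : A, X * Y = 0 → Y * X = 0 →
      (m + n) • δ (X * Y + Y * X) =
        (2 * m) • (op Y • δ X) + (2 * m) • (op X • δ Y)
          + (2 * n) • (X • δ Y) + (2 * n) • (Y • δ X))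
    (hgen : Subring.closure {P : A | P * P = P} = ⊤) :
    ∀ a : A, δ a = 0 :=
  mn_jordan_derivable_at_zero_eq_zero_of_generated_by_idempotents_general m n hm hn hmn δ hadd hδ1
    hzero hgen
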